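/- Let C be a category whose type of objects is countable and whose Hom-sets are all countable, and let W be a class of morphisms of C admitting a left calculus of fractions. Then for any two objects X and Y, the Hom-set from the image of X to the image of Y in the localization of C at W is countable. -/

import Mathlib

open CategoryTheory

universe v u

/-!
Every morphism `L X ⟶ L Y` in a localization with a left calculus of fractions is represented by
a roof `X ⟶ Y' ← Y`, and such roofs are indexed by an object `Y'` together with two morphisms
out of `X` and `Y`; so countably many roofs already exhaust the Hom-set.
-/

namespace CategoryTheory

namespace MorphismProperty

variable {C : Type u} [Category.{v} C]

def LeftFraction.equivSigma (W : MorphismProperty C) (X Y : C) :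
    W.LeftFraction X Y ≃ Σ Z : C, {p : (X ⟶ Z) × (Y ⟶ Z) // W p.2} where
  toFun φ := ⟨φ.Y', (φ.f, φ.s), φ.hs⟩
  invFun p := LeftFraction.mk p.2.1.1 p.2.1.2 p.2.2
  left_inv _ := rfl
  right_inv _ := rfl

lemma LeftFraction.countable [Countable C] (hhom : ∀ X Y : C, Countable (X ⟶ Y))
    (W : MorphismProperty C) (X Y : C) : Countable (W.LeftFraction X Y) :=
  Countable.of_equiv _ (LeftFraction.equivSigma W X Y).symm

end MorphismProperty

section

variable {C : Type u} [Category.{v} C] {D : Type*} [Category D] (L : C ⥤ D)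
  (W : MorphismProperty C) [L.IsLocalization W] [W.HasLeftCalculusOfFractions]

lemma Localization.leftFraction_map_surjective (X Y : C) :
    Function.Surjective fun φ : W.LeftFraction X Y ↦ φ.map L (Localization.inverts L W) :=
  fun f ↦ (Localization.exists_leftFraction L W f).imp fun _ hφ ↦ hφ.symm

lemma Localization.countable_hom_of_countable_leftFraction (X Y : C)
    [Countable (W.LeftFraction X Y)] : Countable (L.obj X ⟶ L.obj Y) :=
  (Localization.leftFraction_map_surjective L W X Y).countable

end

end CategoryTheory

/-- If `C` is a category with countably many objects and countable Hom-sets, and `W` is a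
class of morphisms of `C` admitting a left calculus of fractions, then the Hom-sets of the
localization `C[W⁻¹]` between the images of any two objects of `C` are countable. -/
theorem countable_hom_localization_of_hasLeftCalculusOfFractions
    {C : Type u} [Category.{v} C] [Countable C]
    (hhom : ∀ X Y : C, Countable (X ⟶ Y))
    (W : MorphismProperty C) [W.HasLeftCalculusOfFractions]
    (X Y : C) : Countable (W.Q.obj X ⟶ W.Q.obj Y) :=
  have := MorphismProperty.LeftFraction.countable hhom W X Y
  Localization.countable_hom_of_countable_leftFraction W.Q W X Y
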